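/- arXiv:2311.04367 — 4 statements merged into one kernel-verified Lean document; each statement's English description precedes it below -/
import Mathlib

section
/- Fix q ∈ ℂ with 0 < |q| < 1 and n ∈ ℕ. Then lim_{y → q^{−n}} (y − q^{−n}) / (y; q)_∞ = (−1)^{n+1} q^{n(n−1)/2} / ( (q; q)_n (q; q)_∞ ). -/
open Filter Topology

/-- The infinite q-Pochhammer symbol `(x; q)_∞ = ∏_{k=0}^∞ (1 - q^k x)`. -/
noncomputable def qPochInf (q x : ℂ) : ℂ := ∏' k : ℕ, (1 - q ^ k * x)

/-- The finite q-Pochhammer symbol `(x; q)_n = ∏_{k=0}^{n-1} (1 - q^k x)`. -/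
noncomputable def qPochFin (q x : ℂ) (n : ℕ) : ℂ := ∏ k ∈ Finset.range n, (1 - q ^ k * x)

/-! Splitting off the first `n + 1` factors gives
`(y; q)_∞ = (1 - q^n y) · (y; q)_n · (q^{n+1} y; q)_∞`, where `1 - q^n y = -q^n (y - q^{-n})`.
The cofactor is continuous, since the product converges locally uniformly, and at `y = q^{-n}` it
equals `-q^n (q^{-n}; q)_n (q; q)_∞`, which is nonzero. Writing each factor as
`1 - q^{k-n} = -q^{k-n} (1 - q^{n-k})` turns `(q^{-n}; q)_n` into
`(-1)^n q^{-n(n+1)/2} (q; q)_n`. -/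

theorem tendsto_sub_div_nhdsNE_of_eq_sub_mul {𝕜 : Type*} [NormedField 𝕜] {f h : 𝕜 → 𝕜}
    {c : 𝕜} (hf : ∀ y, f y = (y - c) * h y) (hh : ContinuousAt h c) (hc : h c ≠ 0) :
    Tendsto (fun y => (y - c) / f y) (𝓝[≠] c) (𝓝 (h c)⁻¹) := by
  refine ((hh.inv₀ hc).tendsto.mono_left nhdsWithin_le_nhds).congr' ?_
  filter_upwards [self_mem_nhdsWithin] with y hy
  rw [hf, div_mul_cancel_left₀ (sub_ne_zero.mpr hy), Pi.inv_apply]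

section QPochhammer

variable {q x : ℂ} {n : ℕ}

theorem summable_norm_pow_mul (hq : ‖q‖ < 1) (x : ℂ) :
    Summable fun k : ℕ => ‖q ^ k * x‖ := by
  simpa [norm_mul, norm_pow, mul_comm] using
    (summable_geometric_of_lt_one (norm_nonneg q) hq).mul_left ‖x‖

theorem multipliable_one_sub_pow_mul (hq : ‖q‖ < 1) (x : ℂ) :
    Multipliable fun k : ℕ => 1 - q ^ k * x := by
  have := multipliable_one_add_of_summable (f := fun k : ℕ => -(q ^ k * x))
    (by simpa only [norm_neg] using summable_norm_pow_mul hq x)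
  simpa only [← sub_eq_add_neg] using this

theorem qPochInf_eq_qPochFin_mul (hq : ‖q‖ < 1) (x : ℂ) (m : ℕ) :
    qPochInf q x = qPochFin q x m * qPochInf q (q ^ m * x) := by
  have hshift : ∀ i, 1 - q ^ (i + m) * x = 1 - q ^ i * (q ^ m * x) := fun i => by ring
  have hmul : Multipliable fun i : ℕ => 1 - q ^ (i + m) * x := by
    simpa only [hshift] using multipliable_one_sub_pow_mul hq (q ^ m * x)
  rw [qPochInf, ← Multipliable.prod_mul_tprod_nat_mul' (f := fun i => 1 - q ^ i * x) hmul,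
    tprod_congr hshift, qPochFin, qPochInf]

theorem pow_mul_self_ne_one (hq : ‖q‖ < 1) (k : ℕ) : q ^ k * q ≠ 1 := by
  intro h
  have := congrArg norm h
  rw [← pow_succ, norm_pow, norm_one] at this
  exact (pow_lt_one₀ (norm_nonneg q) hq k.succ_ne_zero).ne this

theorem qPochFin_ne_zero (hx : ∀ k < n, q ^ k * x ≠ 1) : qPochFin q x n ≠ 0 :=
  Finset.prod_ne_zero_iff.mpr fun k hk => sub_ne_zero.mpr (hx k (Finset.mem_range.mp hk)).symm

theorem qPochInf_ne_zero (hq : ‖q‖ < 1) (hx : ∀ k, q ^ k * x ≠ 1) : qPochInf q x ≠ 0 := by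
  simpa [qPochInf, sub_eq_add_neg] using
    tprod_one_add_ne_zero_of_summable (f := fun k : ℕ => -(q ^ k * x))
      (fun k => by simpa [← sub_eq_add_neg, sub_eq_zero] using (hx k).symm)
      (by simpa using summable_norm_pow_mul hq x)

theorem continuous_qPochInf (hq : ‖q‖ < 1) : Continuous (qPochInf q) := by
  refine continuous_iff_continuousAt.mpr fun y₀ => ?_
  have hprod := Summable.hasProdLocallyUniformlyOn_nat_one_add
    (f := fun k (y : ℂ) => -(q ^ k * y)) (K := Metric.ball 0 (‖y₀‖ + 1)) Metric.isOpen_ball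
    ((summable_geometric_of_lt_one (norm_nonneg q) hq).mul_left (‖y₀‖ + 1))
    (.of_forall fun k y hy => by
      rw [norm_neg, norm_mul, norm_pow, mul_comm]
      exact mul_le_mul_of_nonneg_right (mem_ball_zero_iff.mp hy).le (by positivity))
    (fun k => by fun_prop)
  have hcont := ((hasProdLocallyUniformlyOn_iff_tendstoLocallyUniformlyOn.mp hprod).continuousOn
    (.of_forall fun s => by fun_prop)).continuousAt
    (Metric.isOpen_ball.mem_nhds (mem_ball_zero_iff.mpr (lt_add_one _)))
  convert hcont using 1
  funext y
  simp only [qPochInf, sub_eq_add_neg]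

theorem continuous_qPochFin (q : ℂ) (n : ℕ) : Continuous fun x => qPochFin q x n := by
  unfold qPochFin
  fun_prop

theorem prod_range_one_sub_pow_sub (q : ℂ) (n : ℕ) :
    ∏ k ∈ Finset.range n, (1 - q ^ (n - k)) = qPochFin q q n := by
  rw [qPochFin, ← Finset.prod_range_reflect (fun k => 1 - q ^ k * q) n]
  refine Finset.prod_congr rfl fun k hk => ?_
  have := Finset.mem_range.mp hk
  rw [← pow_succ]
  congr 2
  omega

theorem qPochFin_of_pow_mul_eq_one (hx : q ^ n * x = 1) :
    qPochFin q x n = (-1) ^ n * q ^ (n * (n - 1) / 2) * x ^ n * qPochFin q q n := by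
  have hfactor : ∀ k ∈ Finset.range n, 1 - q ^ k * x = -1 * q ^ k * x * (1 - q ^ (n - k)) := by
    intro k hk
    have : q ^ k * q ^ (n - k) = q ^ n := by
      rw [← pow_add, Nat.add_sub_cancel' (Finset.mem_range.mp hk).le]
    linear_combination (-x) * this - hx
  rw [qPochFin, Finset.prod_congr rfl hfactor, Finset.prod_mul_distrib, Finset.prod_mul_distrib,
    Finset.prod_mul_distrib, prod_range_one_sub_pow_sub, Finset.prod_pow_eq_pow_sum,
    Finset.sum_range_id]
  simp

theorem qPochInf_eq_sub_mul (hq : ‖q‖ < 1) (hx : q ^ n * x = 1) (y : ℂ) :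
    qPochInf q y = (y - x) * (-q ^ n * qPochFin q y n * qPochInf q (q ^ (n + 1) * y)) := by
  rw [qPochInf_eq_qPochFin_mul hq y (n + 1), qPochFin, Finset.prod_range_succ, ← qPochFin]
  linear_combination (-(qPochFin q y n * qPochInf q (q ^ (n + 1) * y))) * hx

theorem neg_pow_mul_qPochFin_of_pow_mul_eq_one (hx : q ^ n * x = 1) :
    -q ^ n * qPochFin q x n = (-1) ^ (n + 1) * qPochFin q q n / q ^ (n * (n - 1) / 2) := by
  have hexp : n * (n - 1) / 2 + n * (n - 1) / 2 + n = n * n := by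
    have h := Nat.div_mul_cancel (Nat.even_mul_pred_self n).two_dvd
    cases n with
    | zero => rfl
    | succ m =>
      rw [Nat.add_sub_cancel] at h ⊢
      linarith
  have hinv : q ^ (n * (n - 1) / 2) * (q ^ n * (q ^ (n * (n - 1) / 2) * x ^ n)) = 1 := by
    calc _ = q ^ (n * (n - 1) / 2 + n * (n - 1) / 2 + n) * x ^ n := by ring
      _ = (q ^ n * x) ^ n := by rw [hexp, pow_mul, mul_pow]
      _ = 1 := by rw [hx, one_pow]
  rw [eq_div_iff (left_ne_zero_of_mul_eq_one hinv), qPochFin_of_pow_mul_eq_one hx]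
  linear_combination (-(-1) ^ n * qPochFin q q n) * hinv

end QPochhammer

/-- The residue of `1/(y;q)_∞` at its simple zero `y = q^{-n}`:
`lim_{y → q^{-n}} (y - q^{-n})/(y;q)_∞ = (-1)^{n+1} q^{n(n-1)/2} / ((q;q)_n (q;q)_∞)`. -/
theorem stmt4 (q : ℂ) (hq0 : 0 < ‖q‖) (hq1 : ‖q‖ < 1) (n : ℕ) :
    Tendsto (fun y : ℂ => (y - q ^ (-(n : ℤ))) / qPochInf q y) (𝓝[≠] (q ^ (-(n : ℤ))))
      (𝓝 ((-1) ^ (n + 1) * q ^ (n * (n - 1) / 2) / (qPochFin q q n * qPochInf q q))) := by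
  have hq : q ≠ 0 := norm_pos_iff.mp hq0
  set c := q ^ (-(n : ℤ))
  have hc : q ^ n * c = 1 := by rw [← zpow_natCast, ← zpow_add₀ hq, add_neg_cancel, zpow_zero]
  have hc_succ : q ^ (n + 1) * c = q := by rw [pow_succ', mul_assoc, hc, mul_one]
  have hcont : ContinuousAt (fun y => -q ^ n * qPochFin q y n * qPochInf q (q ^ (n + 1) * y)) c :=
    (((continuous_qPochFin q n).const_mul _).mul
      ((continuous_qPochInf hq1).comp (continuous_const_mul _))).continuousAt
  have hPfin : qPochFin q q n ≠ 0 := qPochFin_ne_zero fun k _ => pow_mul_self_ne_one hq1 k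
  have hPinf : qPochInf q q ≠ 0 := qPochInf_ne_zero hq1 (pow_mul_self_ne_one hq1)
  have hval : -q ^ n * qPochFin q c n * qPochInf q (q ^ (n + 1) * c)
      = ((-1) ^ (n + 1) * q ^ (n * (n - 1) / 2) / (qPochFin q q n * qPochInf q q))⁻¹ := by
    rw [neg_pow_mul_qPochFin_of_pow_mul_eq_one hc, hc_succ]
    field_simp
    rw [← pow_mul, pow_mul', neg_one_sq, one_pow]
  have hne := hval ▸ inv_ne_zero (by simp [hq, hPfin, hPinf])
  simpa only [hval, inv_inv] using
    tendsto_sub_div_nhdsNE_of_eq_sub_mul (qPochInf_eq_sub_mul hq1 hc) hcont hne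
end

section
/- Let q ∈ ℝ with 0 < q < 1, let L ≥ 1, k ∈ {1,…,L}, let x̃_k ∈ ℝ with x̃_k > 0, let x̃_d ∈ ℂ \ {0} for d ≠ k satisfy x̃_d/x̃_k ∉ { q^m : m ∈ ℤ }, and let σ_1,…,σ_L, η ∈ ℂ. Write q^w := exp(w · ln q) for w ∈ ℂ, y^{η−1} := exp((η−1) Log y) with the principal logarithm, and x̃_k^η := exp(η · ln x̃_k). Then for every n ∈ ℕ: lim_{y → q^{−n} x̃_k} (y − q^{−n} x̃_k) · y^{η−1} · ∏_{d=1}^L (q^{1−σ_d} y/x̃_d; q)_∞ / (y/x̃_d; q)_∞ = − x̃_k^η · [(q^{1−σ_k}; q)_∞ / (q; q)_∞] · ∏_{d≠k} (q^{1−σ_d} x̃_k/x̃_d; q)_∞ / (x̃_k/x̃_d; q)_∞ · ( q^{−η} ∏_{d=1}^L q^{1−σ_d} )^n · ∏_{d=1}^L (q^{σ_d} x̃_d/x̃_k; q)_n / (q x̃_d/x̃_k; q)_n. -/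
open Filter Topology

/-! Near `y = q⁻ⁿ x̃ₖ` only the `k`-th factor of the integrand has a pole: splitting
`(y/x̃ₖ; q)_∞ = (y/x̃ₖ; q)ₙ (1 - qⁿ y/x̃ₖ) (qⁿ⁺¹ y/x̃ₖ; q)_∞` exhibits it as the simple zero of
`1 - qⁿ y/x̃ₖ`, which `y - q⁻ⁿ x̃ₖ` cancels up to the constant `-q⁻ⁿ x̃ₖ`. All other factors are
continuous there (the infinite products converge locally uniformly), so the limit is their value
at the pole. These values are computed with `(q⁻ⁿ b; q)_∞ = (q⁻ⁿ b; q)ₙ (b; q)_∞` and the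
reflection `(q⁻ⁿ b; q)ₙ = bⁿ ∏_{j<n} (-q^{j-n}) · (q/b; q)ₙ`, whose `b`-free prefactor cancels
between numerators and denominators. -/

lemma pow_mul_zpow_neg {G₀ : Type*} [GroupWithZero G₀] {a : G₀} (ha : a ≠ 0) (n : ℕ) :
    a ^ n * a ^ (-(n : ℤ)) = 1 := by
  rw [zpow_neg, zpow_natCast, mul_inv_cancel₀ (pow_ne_zero n ha)]

lemma Complex.ofReal_zpow_neg_mul_cpow {q x : ℝ} (hq : 0 < q) (hx : 0 ≤ x) (n : ℕ) (η : ℂ) :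
    ((q : ℂ) ^ (-(n : ℤ)) * x) ^ η = (x : ℂ) ^ η * ((q : ℂ) ^ (-η)) ^ n := by
  have harg : (q : ℂ).arg = 0 := Complex.arg_ofReal_of_nonneg hq.le
  rw [← Complex.ofReal_zpow, Complex.mul_cpow_ofReal_nonneg (zpow_pos hq _).le hx, mul_comm,
    Complex.ofReal_zpow, ← Complex.cpow_int_mul' (by simp [harg, Real.pi_pos])
      (by simp [harg, Real.pi_pos.le]), ← Complex.cpow_nat_mul]
  congr 2
  push_cast
  ring

lemma Complex.self_div_cpow_one_sub {q : ℂ} (hq : q ≠ 0) (s : ℂ) : q / q ^ (1 - s) = q ^ s := by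
  rw [Complex.cpow_sub _ _ hq, Complex.cpow_one, div_div_cancel₀ hq]

namespace QPochhammer

open Finset

variable {q : ℂ}

lemma summable_norm_pow_mul (hq : ‖q‖ < 1) (x : ℂ) : Summable fun j : ℕ => ‖q ^ j * x‖ := by
  simpa [norm_mul, norm_pow] using
    (summable_geometric_of_lt_one (norm_nonneg q) hq).mul_right ‖x‖

lemma multipliable_one_sub_pow_mul (hq : ‖q‖ < 1) (x : ℂ) :
    Multipliable fun j : ℕ => 1 - q ^ j * x := by
  simpa [sub_eq_add_neg] using
    Complex.multipliable_one_add_of_summable (summable_norm_pow_mul hq x).of_norm.neg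

lemma qPochInf_ne_zero (hq : ‖q‖ < 1) {x : ℂ} (h : ∀ j : ℕ, q ^ j * x ≠ 1) :
    qPochInf q x ≠ 0 := by
  simpa [qPochInf, sub_eq_add_neg] using tprod_one_add_ne_zero_of_summable
    (f := fun j : ℕ => -(q ^ j * x))
    (fun j => by simpa [← sub_eq_add_neg, sub_eq_zero] using (h j).symm)
    (by simpa using summable_norm_pow_mul hq x)

lemma qPochFin_ne_zero {x : ℂ} {n : ℕ} (h : ∀ j < n, q ^ j * x ≠ 1) : qPochFin q x n ≠ 0 :=
  prod_ne_zero_iff.mpr fun j hj => sub_ne_zero.mpr (h j (mem_range.mp hj)).symm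

lemma qPochInf_eq_qPochFin_mul (hq : ‖q‖ < 1) (x : ℂ) (m : ℕ) :
    qPochInf q x = qPochFin q x m * qPochInf q (q ^ m * x) := by
  have h := Multipliable.prod_mul_tprod_nat_mul' (f := fun j => 1 - q ^ j * x) (k := m)
    (by simpa [pow_add, mul_assoc] using multipliable_one_sub_pow_mul hq (q ^ m * x))
  unfold qPochFin qPochInf
  rw [← h]
  congr 2 with j
  ring

lemma continuous_qPochFin (q : ℂ) (n : ℕ) : Continuous fun x => qPochFin q x n := by
  unfold qPochFin; fun_prop

lemma continuous_qPochInf (hq : ‖q‖ < 1) : Continuous (qPochInf q) := by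
  refine continuous_iff_continuousAt.mpr fun x₀ => ?_
  have hball : x₀ ∈ Metric.ball (0 : ℂ) (‖x₀‖ + 1) := by simp
  have hbound : ∀ᶠ j in atTop, ∀ x ∈ Metric.ball (0 : ℂ) (‖x₀‖ + 1),
      ‖-(q ^ j * x)‖ ≤ ‖q‖ ^ j * (‖x₀‖ + 1) := Eventually.of_forall fun j x hx => by
    rw [norm_neg, norm_mul, norm_pow]
    gcongr
    simpa using (Metric.mem_ball.mp hx).le
  have hprod := Summable.hasProdLocallyUniformlyOn_nat_one_add Metric.isOpen_ball
    ((summable_geometric_of_lt_one (norm_nonneg q) hq).mul_right _) hbound (fun j => by fun_prop)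
  have hcont := TendstoLocallyUniformlyOn.continuousOn hprod
    (Frequently.of_forall fun s => by fun_prop)
  simp only [← sub_eq_add_neg] at hcont
  exact hcont.continuousAt (Metric.isOpen_ball.mem_nhds hball)

lemma pow_mul_self_ne_one (hq : ‖q‖ < 1) (j : ℕ) : q ^ j * q ≠ 1 := fun h => by
  have := congrArg norm h
  rw [← pow_succ, norm_pow, norm_one] at this
  exact (pow_lt_one₀ (norm_nonneg q) hq j.succ_ne_zero).ne this

lemma qPochInf_self_ne_zero (hq : ‖q‖ < 1) : qPochInf q q ≠ 0 :=
  qPochInf_ne_zero hq (pow_mul_self_ne_one hq)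

lemma qPochFin_self_ne_zero (hq : ‖q‖ < 1) (n : ℕ) : qPochFin q q n ≠ 0 :=
  qPochFin_ne_zero fun j _ => pow_mul_self_ne_one hq j

lemma qPochInf_zpow_mul_ne_zero (hq : ‖q‖ < 1) (hq0 : q ≠ 0) {b : ℂ} (hb : ∀ m : ℤ, b ≠ q ^ m)
    (i : ℤ) : qPochInf q (q ^ i * b) ≠ 0 :=
  qPochInf_ne_zero hq fun j h => hb (-(j + i)) <| by
    rw [zpow_neg, zpow_add₀ hq0, zpow_natCast]
    exact eq_inv_of_mul_eq_one_right (by rwa [mul_assoc])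

lemma qPochFin_div_ne_zero (hq0 : q ≠ 0) {b : ℂ} (hb : ∀ m : ℤ, b ≠ q ^ m) (n : ℕ) :
    qPochFin q (q / b) n ≠ 0 :=
  qPochFin_ne_zero fun j _ h => hb (j + 1) <| by
    have hb0 : b ≠ 0 := by rintro rfl; simp at h
    rw [zpow_add_one₀ hq0, zpow_natCast]
    field_simp at h
    exact h.symm

lemma prod_neg_pow_mul_zpow_neg_ne_zero (hq0 : q ≠ 0) (n : ℕ) :
    ∏ j ∈ range n, -(q ^ j * q ^ (-(n : ℤ))) ≠ 0 :=
  prod_ne_zero_iff.mpr fun j _ =>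
    neg_ne_zero.mpr (mul_ne_zero (pow_ne_zero j hq0) (zpow_ne_zero _ hq0))

lemma qPochFin_zpow_neg_mul (hq0 : q ≠ 0) (n : ℕ) {b : ℂ} (hb : b ≠ 0) :
    qPochFin q (q ^ (-(n : ℤ)) * b) n =
      (∏ j ∈ range n, -(q ^ j * q ^ (-(n : ℤ)))) * b ^ n * qPochFin q (q / b) n := by
  rw [qPochFin, qPochFin, ← prod_range_reflect (fun j => 1 - q ^ j * (q / b)) n,
    ← card_range n, ← prod_const, card_range, ← prod_mul_distrib, ← prod_mul_distrib]
  refine prod_congr rfl fun j hj => ?_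
  have hpow : q ^ (n - 1 - j) * q * q ^ j = q ^ n := by
    rw [← pow_succ, ← pow_add]; congr 1; have := mem_range.mp hj; omega
  field_simp
  linear_combination (-(q ^ (-(n : ℤ)))) * hpow - pow_mul_zpow_neg hq0 n

lemma qPochFin_zpow_neg (hq0 : q ≠ 0) (n : ℕ) :
    qPochFin q (q ^ (-(n : ℤ))) n =
      (∏ j ∈ range n, -(q ^ j * q ^ (-(n : ℤ)))) * qPochFin q q n := by
  simpa using qPochFin_zpow_neg_mul hq0 n one_ne_zero

lemma qPochFin_zpow_neg_self_ne_zero (hq : ‖q‖ < 1) (hq0 : q ≠ 0) (n : ℕ) :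
    qPochFin q (q ^ (-(n : ℤ))) n ≠ 0 := by
  rw [qPochFin_zpow_neg hq0 n]
  exact mul_ne_zero (prod_neg_pow_mul_zpow_neg_ne_zero hq0 n) (qPochFin_self_ne_zero hq n)

lemma qPochInf_zpow_neg_mul (hq : ‖q‖ < 1) (hq0 : q ≠ 0) (n : ℕ) {b : ℂ} (hb : b ≠ 0) :
    qPochInf q (q ^ (-(n : ℤ)) * b) =
      (∏ j ∈ range n, -(q ^ j * q ^ (-(n : ℤ)))) * b ^ n * qPochFin q (q / b) n *
        qPochInf q b := by
  rw [qPochInf_eq_qPochFin_mul hq _ n, qPochFin_zpow_neg_mul hq0 n hb, ← mul_assoc,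
    pow_mul_zpow_neg hq0, one_mul]

lemma qPochInf_div_qPochInf_zpow_neg_mul (hq : ‖q‖ < 1) (hq0 : q ≠ 0) (n : ℕ) {a x c : ℂ}
    (ha : a ≠ 0) (hx : x ≠ 0) (hax : ∀ m : ℤ, a / x ≠ q ^ m) (hc : c ≠ 0) :
    qPochInf q (c * (q ^ (-(n : ℤ)) * a) / x) / qPochInf q (q ^ (-(n : ℤ)) * a / x) =
      c ^ n * (qPochFin q (q / c * x / a) n / qPochFin q (q * x / a) n) *
        (qPochInf q (c * a / x) / qPochInf q (a / x)) := by
  have hfin : qPochFin q (q * x / a) n ≠ 0 := by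
    simpa [div_div_eq_mul_div] using qPochFin_div_ne_zero hq0 hax n
  have hinf : qPochInf q (a / x) ≠ 0 := by simpa using qPochInf_zpow_mul_ne_zero hq hq0 hax 0
  have hC := prod_neg_pow_mul_zpow_neg_ne_zero hq0 n
  have hcax : c * a / x ≠ 0 := div_ne_zero (mul_ne_zero hc ha) hx
  rw [show c * (q ^ (-(n : ℤ)) * a) / x = q ^ (-(n : ℤ)) * (c * a / x) by ring,
    show q ^ (-(n : ℤ)) * a / x = q ^ (-(n : ℤ)) * (a / x) by ring,
    qPochInf_zpow_neg_mul hq hq0 n hcax, qPochInf_zpow_neg_mul hq hq0 n (div_ne_zero ha hx),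
    show q / (c * a / x) = q / c * x / a by field_simp, div_div_eq_mul_div]
  generalize ∏ j ∈ range n, -(q ^ j * q ^ (-(n : ℤ))) = C at hC ⊢
  field_simp
  ring

lemma tendsto_sub_div_qPochInf (hq : ‖q‖ < 1) (hq0 : q ≠ 0) {a : ℂ} (ha : a ≠ 0) (n : ℕ) :
    Tendsto (fun y => (y - q ^ (-(n : ℤ)) * a) / qPochInf q (y / a))
      (𝓝[≠] (q ^ (-(n : ℤ)) * a))
      (𝓝 (-(q ^ (-(n : ℤ)) * a) / (qPochFin q (q ^ (-(n : ℤ))) n * qPochInf q q))) := by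
  set p := q ^ (-(n : ℤ)) * a with hp_def
  have hp : p / a = q ^ (-(n : ℤ)) := by rw [hp_def, mul_div_assoc, div_self ha, mul_one]
  have hshift : q ^ (n + 1) * (p / a) = q := by
    rw [hp, pow_succ', mul_assoc, pow_mul_zpow_neg hq0, mul_one]
  have hfactor : ∀ y ≠ p, (y - p) / qPochInf q (y / a) =
      -p / (qPochFin q (y / a) n * qPochInf q (q ^ (n + 1) * (y / a))) := by
    intro y hy
    have hsub : y - p = -p * (1 - q ^ n * (y / a)) :=
      calc y - p = -p + q ^ n * (p / a) * y := by rw [hp, pow_mul_zpow_neg hq0, one_mul]; ring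
        _ = -p * (1 - q ^ n * (y / a)) := by ring
    have hpole : 1 - q ^ n * (y / a) ≠ 0 := fun h =>
      hy (sub_eq_zero.mp (by rw [hsub, h, mul_zero]))
    rw [qPochInf_eq_qPochFin_mul hq _ (n + 1), qPochFin, prod_range_succ, ← qPochFin, hsub,
      mul_right_comm (qPochFin q (y / a) n), mul_div_mul_right _ _ hpole]
  have hlimit : ContinuousAt
      (fun y => -p / (qPochFin q (y / a) n * qPochInf q (q ^ (n + 1) * (y / a)))) p := by
    refine ContinuousAt.div (by fun_prop) ?_ ?_
    · exact ((continuous_qPochFin q n).comp (continuous_id.div_const a)).continuousAt.mul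
        ((continuous_qPochInf hq).comp ((continuous_id.div_const a).const_mul _)).continuousAt
    · rw [hshift, hp]
      exact mul_ne_zero (qPochFin_zpow_neg_self_ne_zero hq hq0 n) (qPochInf_self_ne_zero hq)
  have hlim := (hlimit.continuousWithinAt (s := {p}ᶜ)).tendsto
  rw [hshift, hp] at hlim
  exact hlim.congr' (eventually_nhdsWithin_of_forall fun y hy => (hfactor y hy).symm)

lemma tendsto_sub_mul_qPochInf_div_qPochInf (hq : ‖q‖ < 1) (hq0 : q ≠ 0) {a c : ℂ} (ha : a ≠ 0)
    (hc : c ≠ 0) (n : ℕ) :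
    Tendsto (fun y => (y - q ^ (-(n : ℤ)) * a) * (qPochInf q (c * y / a) / qPochInf q (y / a)))
      (𝓝[≠] (q ^ (-(n : ℤ)) * a))
      (𝓝 (-(q ^ (-(n : ℤ)) * a) * c ^ n * (qPochFin q (q / c) n / qPochFin q q n) *
        (qPochInf q c / qPochInf q q))) := by
  have hnum : ContinuousAt (fun y => qPochInf q (c * y / a)) (q ^ (-(n : ℤ)) * a) :=
    ((continuous_qPochInf hq).comp ((continuous_const_mul c).div_const a)).continuousAt
  have hlim := (tendsto_sub_div_qPochInf hq hq0 ha n).mul hnum.continuousWithinAt.tendsto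
  have hpole : c * (q ^ (-(n : ℤ)) * a) / a = q ^ (-(n : ℤ)) * c := by field_simp
  rw [hpole, qPochInf_zpow_neg_mul hq hq0 n hc, qPochFin_zpow_neg hq0 n] at hlim
  convert hlim using 2 with y
  · ring
  · have := qPochFin_self_ne_zero hq n
    have := qPochInf_self_ne_zero hq
    have hC := prod_neg_pow_mul_zpow_neg_ne_zero hq0 n
    generalize ∏ j ∈ range n, -(q ^ j * q ^ (-(n : ℤ))) = C at hC ⊢
    field_simp

lemma continuousAt_prod_qPochInf_div_qPochInf (hq : ‖q‖ < 1) (hq0 : q ≠ 0) {ι : Type*}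
    (s : Finset ι) (c x : ι → ℂ) {a : ℂ} (hax : ∀ i ∈ s, ∀ m : ℤ, a / x i ≠ q ^ m) (k : ℤ) :
    ContinuousAt (fun y => ∏ i ∈ s, qPochInf q (c i * y / x i) / qPochInf q (y / x i))
      (q ^ k * a) := by
  refine tendsto_finsetProd _ fun i hi => ?_
  refine ((continuous_qPochInf hq).continuousAt.comp (by fun_prop)).div
    ((continuous_qPochInf hq).continuousAt.comp (by fun_prop)) ?_
  rw [mul_div_assoc]
  exact qPochInf_zpow_mul_ne_zero hq hq0 (hax i hi) k

lemma tendsto_sub_mul_cpow_mul_qPochInf_div_qPochInf {q a : ℝ} (hq0 : 0 < q) (hq1 : q < 1)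
    (ha : 0 < a) {c : ℂ} (hc : c ≠ 0) (η : ℂ) (n : ℕ) :
    Tendsto (fun y => (y - (q : ℂ) ^ (-(n : ℤ)) * a) * y ^ (η - 1) *
        (qPochInf q (c * y / a) / qPochInf q (y / a)))
      (𝓝[≠] ((q : ℂ) ^ (-(n : ℤ)) * a))
      (𝓝 (-((a : ℂ) ^ η * ((q : ℂ) ^ (-η)) ^ n * c ^ n *
        (qPochFin q (q / c) n / qPochFin q q n) * (qPochInf q c / qPochInf q q)))) := by
  have hQ : ‖(q : ℂ)‖ < 1 := by rwa [Complex.norm_real, Real.norm_of_nonneg hq0.le]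
  have hQ0 : (q : ℂ) ≠ 0 := Complex.ofReal_ne_zero.mpr hq0.ne'
  have hp : (q : ℂ) ^ (-(n : ℤ)) * a = ((q ^ (-(n : ℤ)) * a : ℝ) : ℂ) := by push_cast; rfl
  have hp0 : (q : ℂ) ^ (-(n : ℤ)) * a ≠ 0 := by rw [hp]; exact_mod_cast (by positivity)
  have hpow : ContinuousAt (· ^ (η - 1)) ((q : ℂ) ^ (-(n : ℤ)) * a) :=
    continuousAt_cpow_const (hp ▸ Complex.ofReal_mem_slitPlane.mpr (by positivity))
  have hpη : (q : ℂ) ^ (-(n : ℤ)) * a * ((q : ℂ) ^ (-(n : ℤ)) * a) ^ (η - 1) =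
      (a : ℂ) ^ η * ((q : ℂ) ^ (-η)) ^ n := by
    rw [Complex.cpow_sub _ _ hp0, Complex.cpow_one, mul_div_cancel₀ _ hp0,
      Complex.ofReal_zpow_neg_mul_cpow hq0 ha.le]
  convert (tendsto_sub_mul_qPochInf_div_qPochInf hQ hQ0 (Complex.ofReal_ne_zero.mpr ha.ne') hc
    n).mul hpow.continuousWithinAt.tendsto using 2 with y
  · ring
  · linear_combination (c ^ n * (qPochFin q (q / c) n / qPochFin q q n) *
      (qPochInf q c / qPochInf q q)) * hpη

end QPochhammer

open QPochhammer Finset in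
theorem stmt5_general (q : ℝ) (hq0 : 0 < q) (hq1 : q < 1) (L : ℕ) (k : Fin L)
    (xk : ℝ) (hxk : 0 < xk) (xt : Fin L → ℂ) (hxtk : xt k = (xk : ℂ))
    (hx0 : ∀ d, d ≠ k → xt d ≠ 0)
    (hgen : ∀ d, d ≠ k → ∀ m : ℤ, xt d / xt k ≠ (q : ℂ) ^ m)
    (σ : Fin L → ℂ) (η : ℂ) (n : ℕ) :
    Tendsto
      (fun y : ℂ => (y - (q : ℂ) ^ (-(n : ℤ)) * xt k) * y ^ (η - 1) *
        ∏ d, qPochInf (q : ℂ) ((q : ℂ) ^ (1 - σ d) * y / xt d) / qPochInf (q : ℂ) (y / xt d))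
      (𝓝[≠] ((q : ℂ) ^ (-(n : ℤ)) * xt k))
      (𝓝 (-(xt k ^ η *
        (qPochInf (q : ℂ) ((q : ℂ) ^ (1 - σ k)) / qPochInf (q : ℂ) (q : ℂ)) *
        (∏ d ∈ Finset.univ.erase k,
          qPochInf (q : ℂ) ((q : ℂ) ^ (1 - σ d) * xt k / xt d) /
            qPochInf (q : ℂ) (xt k / xt d)) *
        ((q : ℂ) ^ (-η) * ∏ d, (q : ℂ) ^ (1 - σ d)) ^ n *
        ∏ d, qPochFin (q : ℂ) ((q : ℂ) ^ σ d * xt d / xt k) n /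
          qPochFin (q : ℂ) ((q : ℂ) * xt d / xt k) n))) := by
  have hQ : ‖(q : ℂ)‖ < 1 := by rwa [Complex.norm_real, Real.norm_of_nonneg hq0.le]
  have hQ0 : (q : ℂ) ≠ 0 := Complex.ofReal_ne_zero.mpr hq0.ne'
  have hxk0 : xt k ≠ 0 := hxtk ▸ Complex.ofReal_ne_zero.mpr hxk.ne'
  have hcpow : ∀ s : ℂ, (q : ℂ) ^ s ≠ 0 := fun s => Complex.cpow_ne_zero_iff.mpr (Or.inl hQ0)
  have hoff : ∀ d ∈ univ.erase k, ∀ m : ℤ, xt k / xt d ≠ (q : ℂ) ^ m := fun d hd m h =>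
    hgen d (ne_of_mem_erase hd) (-m) (by rw [zpow_neg, ← h, inv_div])
  have hres := tendsto_sub_mul_cpow_mul_qPochInf_div_qPochInf hq0 hq1 hxk (hcpow (1 - σ k)) η n
  rw [← hxtk, Complex.self_div_cpow_one_sub hQ0] at hres
  have hrest := continuousAt_prod_qPochInf_div_qPochInf hQ hQ0 (univ.erase k)
    (fun d => (q : ℂ) ^ (1 - σ d)) xt hoff (-(n : ℤ))
  convert hres.mul hrest.continuousWithinAt.tendsto using 2 with y
  · rw [← mul_prod_erase univ _ (mem_univ k)]
    ring
  · rw [prod_congr rfl fun d hd => qPochInf_div_qPochInf_zpow_neg_mul hQ hQ0 n hxk0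
      (hx0 d (ne_of_mem_erase hd)) (hoff d hd) (hcpow (1 - σ d))]
    simp only [Complex.self_div_cpow_one_sub hQ0, prod_mul_distrib, prod_pow]
    rw [← mul_prod_erase univ (fun d => (q : ℂ) ^ (1 - σ d)) (mem_univ k),
      ← mul_prod_erase univ (fun d => qPochFin (q : ℂ) ((q : ℂ) ^ σ d * xt d / xt k) n /
        qPochFin (q : ℂ) ((q : ℂ) * xt d / xt k) n) (mem_univ k),
      mul_div_cancel_right₀ _ hxk0, mul_div_cancel_right₀ _ hxk0]
    ring

/-- The residue of the `W_{q,t}(A₁)` magnetic block integrand at the pole `y = q^{-n} x̃_k`. -/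
theorem stmt5 (q : ℝ) (hq0 : 0 < q) (hq1 : q < 1) (L : ℕ) (hL : 1 ≤ L) (k : Fin L)
    (xk : ℝ) (hxk : 0 < xk) (xt : Fin L → ℂ) (hxtk : xt k = (xk : ℂ))
    (hx0 : ∀ d, d ≠ k → xt d ≠ 0)
    (hgen : ∀ d, d ≠ k → ∀ m : ℤ, xt d / xt k ≠ (q : ℂ) ^ m)
    (σ : Fin L → ℂ) (η : ℂ) (n : ℕ) :
    Tendsto
      (fun y : ℂ => (y - (q : ℂ) ^ (-(n : ℤ)) * xt k) * y ^ (η - 1) *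
        ∏ d, qPochInf (q : ℂ) ((q : ℂ) ^ (1 - σ d) * y / xt d) / qPochInf (q : ℂ) (y / xt d))
      (𝓝[≠] ((q : ℂ) ^ (-(n : ℤ)) * xt k))
      (𝓝 (-(xt k ^ η *
        (qPochInf (q : ℂ) ((q : ℂ) ^ (1 - σ k)) / qPochInf (q : ℂ) (q : ℂ)) *
        (∏ d ∈ Finset.univ.erase k,
          qPochInf (q : ℂ) ((q : ℂ) ^ (1 - σ d) * xt k / xt d) /
            qPochInf (q : ℂ) (xt k / xt d)) *
        ((q : ℂ) ^ (-η) * ∏ d, (q : ℂ) ^ (1 - σ d)) ^ n *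
        ∏ d, qPochFin (q : ℂ) ((q : ℂ) ^ σ d * xt d / xt k) n /
          qPochFin (q : ℂ) ((q : ℂ) * xt d / xt k) n))) :=
  stmt5_general q hq0 hq1 L k xk hxk xt hxtk hx0 hgen σ η n
end

section
/- Let q ∈ ℂ with 0 < |q| < 1, let L ≥ 1 and k ∈ {1,…,L}, let x̃_1,…,x̃_L, z ∈ ℂ \ {0} and p_1,…,p_L ∈ ℂ \ {0}, and set P_k := ∏_{d=1}^k p_d. Define, for y ∈ ℂ \ {0}, Stab_k(y) := ∏_{d<k} Θ_q(x̃_d/y) · Θ_q( P_k x̃_k/(y z) ) · ∏_{d>k} Θ_q(p_d x̃_d/y). Then: (i) Stab_k(x̃_{k'}) = 0 for every k' < k; and (ii) if x̃_d/x̃_k ∉ { q^m : m ∈ ℤ } for all d < k, p_d x̃_d/x̃_k ∉ { q^m : m ∈ ℤ } for all d > k, and P_k/z ∉ { q^m : m ∈ ℤ }, then Stab_k(x̃_k) ≠ 0. -/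
/-- The theta function `Θ_q(x) = (x; q)_∞ (q/x; q)_∞`. -/
noncomputable def thetaQ (q x : ℂ) : ℂ := qPochInf q x * qPochInf q (q / x)

/-!
Part (i): for `k' < k` the product over `d < k` contains the factor `Θ_q(x̃_{k'}/x̃_{k'}) = Θ_q(1)`,
and `(1; q)_∞ = 0` because its `k = 0` factor is `1 - 1`.
Part (ii): for `|q| < 1` the factors of `(w; q)_∞` tend to `1` geometrically fast, so the
infinite product vanishes only if one of its factors does; hence `Θ_q(x) = 0` forces
`x = q^{-n}` or `x = q^{n+1}`, which the genericity assumptions exclude for every factor of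
`Stab_k(x̃_k)` (the middle one being `Θ_q(P_k/z)`).
-/

lemma qPochInf_one (q : ℂ) : qPochInf q 1 = 0 :=
  tprod_of_exists_eq_zero ⟨0, by simp⟩

lemma thetaQ_one (q : ℂ) : thetaQ q 1 = 0 := by
  simp [thetaQ, qPochInf_one]

lemma qPochInf_ne_zero_s12 {q w : ℂ} (hq : ‖q‖ < 1) (hw : ∀ n : ℕ, 1 - q ^ n * w ≠ 0) :
    qPochInf q w ≠ 0 := by
  have hsum : Summable fun n : ℕ => ‖-(q ^ n * w)‖ := by
    simpa [norm_mul, norm_pow] using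
      (summable_geometric_of_lt_one (norm_nonneg q) hq).mul_right ‖w‖
  simpa [qPochInf, sub_eq_add_neg] using
    tprod_one_add_ne_zero_of_summable (fun n => by simpa [sub_eq_add_neg] using hw n) hsum

lemma thetaQ_ne_zero {q x : ℂ} (hq : ‖q‖ < 1) (hx : ∀ m : ℤ, x ≠ q ^ m) : thetaQ q x ≠ 0 := by
  refine mul_ne_zero (qPochInf_ne_zero_s12 hq fun n hn => ?_) (qPochInf_ne_zero_s12 hq fun n hn => ?_)
  · have hqx : q ^ n * x = 1 := by linear_combination -hn
    apply hx (-n)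
    rw [zpow_neg, zpow_natCast, eq_inv_of_mul_eq_one_right hqx]
  · have hx0 : x ≠ 0 := by rintro rfl; simp at hn
    have hq0 : q ≠ 0 := by rintro rfl; simp at hn
    apply hx (n + 1)
    rw [zpow_add_one₀ hq0, zpow_natCast]
    field_simp at hn
    linear_combination hn

theorem stmt12_general (q : ℂ) (hq1 : ‖q‖ < 1) (L : ℕ) (k : Fin L)
    (xt : Fin L → ℂ) (hx0 : ∀ d, xt d ≠ 0) (z : ℂ)
    (p : Fin L → ℂ) :
    (∀ k' : Fin L, k' < k →
      (∏ d ∈ Finset.univ.filter (fun d => d < k), thetaQ q (xt d / xt k')) *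
        thetaQ q ((∏ d ∈ Finset.univ.filter (fun d => d ≤ k), p d) * xt k / (xt k' * z)) *
        (∏ d ∈ Finset.univ.filter (fun d => k < d), thetaQ q (p d * xt d / xt k')) = 0) ∧
    ((∀ d, d < k → ∀ m : ℤ, xt d / xt k ≠ q ^ m) →
      (∀ d, k < d → ∀ m : ℤ, p d * xt d / xt k ≠ q ^ m) →
      (∀ m : ℤ, (∏ d ∈ Finset.univ.filter (fun d => d ≤ k), p d) / z ≠ q ^ m) →
      (∏ d ∈ Finset.univ.filter (fun d => d < k), thetaQ q (xt d / xt k)) *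
        thetaQ q ((∏ d ∈ Finset.univ.filter (fun d => d ≤ k), p d) * xt k / (xt k * z)) *
        (∏ d ∈ Finset.univ.filter (fun d => k < d), thetaQ q (p d * xt d / xt k)) ≠ 0) := by
  refine ⟨fun k' hk' => ?_, fun hlow hhigh hmid => ?_⟩
  · have hvanish : thetaQ q (xt k' / xt k') = 0 := by rw [div_self (hx0 k'), thetaQ_one]
    rw [Finset.prod_eq_zero (i := k') (by simpa using hk') hvanish,
      zero_mul, zero_mul]
  · rw [mul_comm (xt k) z, mul_div_mul_right _ _ (hx0 k)]
    refine mul_ne_zero (mul_ne_zero ?_ (thetaQ_ne_zero hq1 hmid)) ?_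
    all_goals
      refine Finset.prod_ne_zero_iff.mpr fun d hd => thetaQ_ne_zero hq1 ?_
      rw [Finset.mem_filter] at hd
    exacts [hlow d hd.2, hhigh d hd.2]

/-- Triangularity of the elliptic stable envelope: it vanishes at `y = x̃_{k'}` for `k' < k`,
and is nonzero at `y = x̃_k` under genericity assumptions. -/
theorem stmt12 (q : ℂ) (hq0 : 0 < ‖q‖) (hq1 : ‖q‖ < 1) (L : ℕ) (hL : 1 ≤ L) (k : Fin L)
    (xt : Fin L → ℂ) (hx0 : ∀ d, xt d ≠ 0) (z : ℂ) (hz : z ≠ 0)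
    (p : Fin L → ℂ) (hp : ∀ d, p d ≠ 0) :
    (∀ k' : Fin L, k' < k →
      (∏ d ∈ Finset.univ.filter (fun d => d < k), thetaQ q (xt d / xt k')) *
        thetaQ q ((∏ d ∈ Finset.univ.filter (fun d => d ≤ k), p d) * xt k / (xt k' * z)) *
        (∏ d ∈ Finset.univ.filter (fun d => k < d), thetaQ q (p d * xt d / xt k')) = 0) ∧
    ((∀ d, d < k → ∀ m : ℤ, xt d / xt k ≠ q ^ m) →
      (∀ d, k < d → ∀ m : ℤ, p d * xt d / xt k ≠ q ^ m) →
      (∀ m : ℤ, (∏ d ∈ Finset.univ.filter (fun d => d ≤ k), p d) / z ≠ q ^ m) →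
      (∏ d ∈ Finset.univ.filter (fun d => d < k), thetaQ q (xt d / xt k)) *
        thetaQ q ((∏ d ∈ Finset.univ.filter (fun d => d ≤ k), p d) * xt k / (xt k * z)) *
        (∏ d ∈ Finset.univ.filter (fun d => k < d), thetaQ q (p d * xt d / xt k)) ≠ 0) :=
  stmt12_general q hq1 L k xt hx0 z p
end

section
/- Let β ∈ ℝ with β > 0 and let x ∈ ℂ with |x| < 1. Then lim_{q → 1⁻} ∏_{k=0}^∞ (1 − x q^k)/(1 − x q^{k+β}) = (1 − x)^β, where q ranges over real numbers in (0,1), q^{k+β} := exp((k+β) ln q), and (1 − x)^β := exp(β · Log(1 − x)) with the principal logarithm. -/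
/-!
Taking logarithms factorwise and expanding `log (1 - z) = -∑ zⁿ/n`, the logarithm of the
product becomes an absolutely convergent double series over `(k, n)`; summing the geometric
series in `k` first gives `∑ₙ xⁿ/n · (q^{βn} - 1)/(1 - qⁿ)`.
As `q → 1⁻` each coefficient `(1 - (qⁿ)^β)/(1 - qⁿ)` tends to `β`, the derivative of `t ↦ t^β`
at `1`, and it is bounded by `max β 1` uniformly in `q` and `n`, so dominated convergence
yields `-β ∑ₙ xⁿ/n = β log (1 - x)`.
-/

open Filter Topology Complex

section NormedRing

variable {R : Type*} [SeminormedRing R] {x a q : R}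

lemma one_sub_ne_zero_of_norm_lt_one [NormOneClass R] (hx : ‖x‖ < 1) : 1 - x ≠ 0 :=
  sub_ne_zero.mpr fun h => by simp [← h] at hx

lemma norm_mul_lt_one_of_lt_of_le (hx : ‖x‖ < 1) (ha : ‖a‖ ≤ 1) : ‖x * a‖ < 1 :=
  (norm_mul_le x a).trans_lt <| (mul_le_of_le_one_right (norm_nonneg x) ha).trans_lt hx

lemma norm_mul_pow_lt_one [NormOneClass R] (hx : ‖x‖ < 1) (hq : ‖q‖ ≤ 1) (k : ℕ) :
    ‖x * q ^ k‖ < 1 :=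
  norm_mul_lt_one_of_lt_of_le hx <| (norm_pow_le q k).trans (pow_le_one₀ (norm_nonneg q) hq)

end NormedRing

lemma Complex.norm_pow_succ_div_le (x : ℂ) (n : ℕ) : ‖x ^ (n + 1) / (n + 1)‖ ≤ ‖x‖ ^ (n + 1) := by
  rw [norm_div, norm_pow, ← Nat.cast_add_one, norm_natCast]
  exact div_le_self (by positivity) (by exact_mod_cast n.succ_pos)

namespace QPochhammer

noncomputable def logTerm (x a q : ℂ) (k n : ℕ) : ℂ :=
  x ^ (n + 1) * (a ^ (n + 1) - 1) / (n + 1) * (q ^ (n + 1)) ^ k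

variable {x a q : ℂ}

lemma hasSum_logTerm_log_sub_log (hx : ‖x‖ < 1) (ha : ‖a‖ ≤ 1) (hq : ‖q‖ ≤ 1) (k : ℕ) :
    HasSum (logTerm x a q k) (log (1 - x * q ^ k) - log (1 - x * a * q ^ k)) := by
  have hxa := norm_mul_lt_one_of_lt_of_le hx ha
  have h := (hasSum_taylorSeries_neg_log' (norm_mul_pow_lt_one hxa hq k)).sub
    (hasSum_taylorSeries_neg_log' (norm_mul_pow_lt_one hx hq k))
  rw [neg_sub_neg] at h
  refine h.congr_fun fun n => ?_
  simp only [logTerm]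
  ring

lemma hasSum_logTerm_geometric (hq : ‖q‖ < 1) (n : ℕ) :
    HasSum (fun k => logTerm x a q k n)
      (x ^ (n + 1) * (a ^ (n + 1) - 1) / (n + 1) / (1 - q ^ (n + 1))) := by
  have hqn : ‖q ^ (n + 1)‖ < 1 := by
    rw [norm_pow]; exact pow_lt_one₀ (norm_nonneg q) hq n.succ_ne_zero
  rw [div_eq_mul_inv _ (1 - _)]
  exact (hasSum_geometric_of_norm_lt_one hqn).mul_left _

lemma norm_logTerm_le (ha : ‖a‖ ≤ 1) (hq : ‖q‖ ≤ 1) (k n : ℕ) :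
    ‖logTerm x a q k n‖ ≤ ‖q‖ ^ k * (2 * ‖x‖ ^ (n + 1)) := by
  have h_diff : ‖a ^ (n + 1) - 1‖ ≤ 2 := by
    refine (norm_sub_le _ _).trans ?_
    rw [norm_pow, norm_one]
    linarith [pow_le_one₀ (norm_nonneg a) ha (n := n + 1)]
  have h_geom : ‖(q ^ (n + 1)) ^ k‖ ≤ ‖q‖ ^ k := by
    rw [norm_pow, norm_pow]
    exact pow_le_pow_left₀ (by positivity) (pow_le_of_le_one (norm_nonneg q) hq n.succ_ne_zero) k
  rw [logTerm, mul_div_right_comm, norm_mul, norm_mul]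
  calc ‖x ^ (n + 1) / (n + 1)‖ * ‖a ^ (n + 1) - 1‖ * ‖(q ^ (n + 1)) ^ k‖
      ≤ ‖x‖ ^ (n + 1) * 2 * ‖q‖ ^ k := by gcongr; exact norm_pow_succ_div_le x n
    _ = ‖q‖ ^ k * (2 * ‖x‖ ^ (n + 1)) := by ring

lemma summable_logTerm (hx : ‖x‖ < 1) (ha : ‖a‖ ≤ 1) (hq : ‖q‖ < 1) :
    Summable (Function.uncurry (logTerm x a q)) := by
  have h_geom_x : Summable (fun n : ℕ => 2 * ‖x‖ ^ (n + 1)) :=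
    ((summable_geometric_of_lt_one (norm_nonneg x) hx).comp_injective
      (add_left_injective 1)).mul_left 2
  have h_bound := (summable_geometric_of_lt_one (norm_nonneg q) hq).mul_of_nonneg h_geom_x
    (fun _ => by positivity) (fun _ => by positivity)
  exact .of_norm_bounded h_bound fun ⟨k, n⟩ => norm_logTerm_le ha hq.le k n

theorem hasProd_one_sub_mul_pow_div (hx : ‖x‖ < 1) (ha : ‖a‖ ≤ 1) (hq : ‖q‖ < 1) :
    HasProd (fun k : ℕ => (1 - x * q ^ k) / (1 - x * a * q ^ k))
      (exp (∑' n : ℕ, x ^ (n + 1) * (a ^ (n + 1) - 1) / (n + 1) / (1 - q ^ (n + 1)))) := by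
  have h_sum := (summable_logTerm hx ha hq).hasSum
  have h_rows := h_sum.prod_fiberwise (hasSum_logTerm_log_sub_log hx ha hq.le)
  have h_cols := ((Equiv.prodComm ℕ ℕ).hasSum_iff.mpr h_sum).prod_fiberwise
    (hasSum_logTerm_geometric hq)
  rw [h_cols.tsum_eq]
  refine h_rows.cexp.congr_fun fun k => ?_
  have hxa := norm_mul_lt_one_of_lt_of_le hx ha
  rw [Function.comp_apply, exp_sub,
    exp_log (one_sub_ne_zero_of_norm_lt_one (norm_mul_pow_lt_one hx hq.le k)),
    exp_log (one_sub_ne_zero_of_norm_lt_one (norm_mul_pow_lt_one hxa hq.le k))]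

end QPochhammer

namespace Real

lemma tendsto_one_sub_rpow_div_one_sub (β : ℝ) :
    Tendsto (fun t : ℝ => (1 - t ^ β) / (1 - t)) (𝓝[≠] 1) (𝓝 β) := by
  have h := hasDerivAt_iff_tendsto_slope.mp
    (by simpa using hasDerivAt_rpow_const (x := 1) (p := β) (Or.inl one_ne_zero))
  refine h.congr fun t => ?_
  rw [slope_def_field, one_rpow, ← neg_div_neg_eq, neg_sub, neg_sub]

lemma one_sub_rpow_le_mul_one_sub {β t : ℝ} (ht₀ : 0 < t) (ht₁ : t < 1) :
    1 - t ^ β ≤ max β 1 * (1 - t) := by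
  rcases le_total β 1 with h | h
  · have h_pow : t ^ (1 : ℝ) ≤ t ^ β := rpow_le_rpow_of_exponent_ge ht₀ ht₁.le h
    rw [rpow_one] at h_pow
    nlinarith [le_max_right β 1]
  · have h_bernoulli := one_add_mul_self_le_rpow_one_add (by linarith : (-1 : ℝ) ≤ t - 1) h
    rw [add_sub_cancel] at h_bernoulli
    nlinarith [le_max_left β 1]

lemma abs_one_sub_rpow_div_one_sub_le {β t : ℝ} (hβ : 0 ≤ β) (ht₀ : 0 < t) (ht₁ : t < 1) :
    |(1 - t ^ β) / (1 - t)| ≤ max β 1 := by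
  have h_num : 0 ≤ 1 - t ^ β := sub_nonneg.mpr (rpow_le_one ht₀.le ht₁.le hβ)
  rw [abs_of_nonneg (div_nonneg h_num (by linarith)), div_le_iff₀ (by linarith)]
  exact one_sub_rpow_le_mul_one_sub ht₀ ht₁

end Real

lemma tendsto_pow_succ_nhdsNE_one (n : ℕ) :
    Tendsto (fun q : ℝ => q ^ (n + 1)) (𝓝[Set.Ioo 0 1] 1) (𝓝[≠] 1) :=
  tendsto_nhdsWithin_of_tendsto_nhds_of_eventually_within _
    (((continuous_pow (n + 1)).tendsto' 1 1 (one_pow _)).mono_left nhdsWithin_le_nhds)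
    (eventually_nhdsWithin_of_forall fun _ hq => (pow_lt_one₀ hq.1.le hq.2 n.succ_ne_zero).ne)

theorem tendsto_tsum_pow_succ_div_mul_one_sub_rpow_div {β : ℝ} (hβ : 0 ≤ β) {x : ℂ}
    (hx : ‖x‖ < 1) :
    Tendsto (fun q : ℝ => ∑' n : ℕ,
        x ^ (n + 1) / (n + 1) * (((1 - (q ^ (n + 1)) ^ β) / (1 - q ^ (n + 1)) : ℝ) : ℂ))
      (𝓝[Set.Ioo 0 1] 1) (𝓝 (-log (1 - x) * β)) := by
  have h_bound : Summable fun n : ℕ => ‖x‖ ^ (n + 1) * max β 1 :=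
    ((summable_geometric_of_lt_one (norm_nonneg x) hx).comp_injective
      (add_left_injective 1)).mul_right _
  rw [← ((hasSum_taylorSeries_neg_log' hx).mul_right (β : ℂ)).tsum_eq]
  refine tendsto_tsum_of_dominated_convergence h_bound (fun n => ?_) ?_
  · exact ((continuous_ofReal.tendsto _).comp ((Real.tendsto_one_sub_rpow_div_one_sub β).comp
      (tendsto_pow_succ_nhdsNE_one n))).const_mul _
  · filter_upwards [self_mem_nhdsWithin] with q ⟨hq₀, hq₁⟩ n
    rw [norm_mul, norm_real, Real.norm_eq_abs]
    exact mul_le_mul (norm_pow_succ_div_le x n) (Real.abs_one_sub_rpow_div_one_sub_le hβ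
      (pow_pos hq₀ _) (pow_lt_one₀ hq₀.le hq₁ n.succ_ne_zero)) (abs_nonneg _) (by positivity)

theorem hasProd_one_sub_mul_rpow_div {β : ℝ} (hβ : 0 ≤ β) {x : ℂ} (hx : ‖x‖ < 1) {q : ℝ}
    (hq₀ : 0 < q) (hq₁ : q < 1) :
    HasProd (fun k : ℕ => (1 - x * (q : ℂ) ^ k) / (1 - x * ((q ^ ((k : ℝ) + β) : ℝ) : ℂ)))
      (exp (-∑' n : ℕ,
        x ^ (n + 1) / (n + 1) * (((1 - (q ^ (n + 1)) ^ β) / (1 - q ^ (n + 1)) : ℝ) : ℂ))) := by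
  have ha : ‖((q ^ β : ℝ) : ℂ)‖ ≤ 1 := by
    rw [norm_real, Real.norm_of_nonneg (by positivity)]
    exact Real.rpow_le_one hq₀.le hq₁.le hβ
  have hq : ‖(q : ℂ)‖ < 1 := by rwa [norm_real, Real.norm_of_nonneg hq₀.le]
  convert QPochhammer.hasProd_one_sub_mul_pow_div hx ha hq using 2 with k
  · rw [Real.rpow_add hq₀, Real.rpow_natCast]
    push_cast
    ring
  · rw [← tsum_neg]
    congr 1 with n
    rw [← Real.rpow_pow_comm hq₀.le]
    push_cast
    ring

/-- The conformal limit: for `β > 0` and `|x| < 1`,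
`lim_{q → 1⁻} (x; q)_∞ / (x q^β; q)_∞ = (1 - x)^β`. -/
theorem stmt16 (β : ℝ) (hβ : 0 < β) (x : ℂ) (hx : ‖x‖ < 1) :
    Tendsto
      (fun q : ℝ =>
        ∏' k : ℕ, (1 - x * (q : ℂ) ^ k) / (1 - x * ((q ^ ((k : ℝ) + β) : ℝ) : ℂ)))
      (𝓝[Set.Ioo (0 : ℝ) 1] 1) (𝓝 ((1 - x) ^ (β : ℂ))) := by
  have h_exponent := (tendsto_tsum_pow_succ_div_mul_one_sub_rpow_div hβ.le hx).neg
  rw [neg_mul, neg_neg] at h_exponent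
  rw [cpow_def_of_ne_zero (one_sub_ne_zero_of_norm_lt_one hx)]
  refine ((continuous_exp.tendsto _).comp h_exponent).congr' ?_
  filter_upwards [self_mem_nhdsWithin] with q ⟨hq₀, hq₁⟩
  exact (hasProd_one_sub_mul_rpow_div hβ.le hx hq₀ hq₁).tprod_eq.symm
end
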